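/- arXiv:1607.03558 — 7 statements merged into one kernel-verified Lean document; each statement's English description precedes it below -/
import Mathlib

section
/- Let $z, p \in \mathbb{C}$ with $z \neq 0$, $p \neq 0$, and $p \neq 1$. Define the $3 \times 3$ matrices $L'(z,p) := \begin{pmatrix} 0 & 0 & 1 \\ p-1 & 0 & p \\ 0 & z^{-1}(p-1)^{-1} & p(1-p)^{-1} \end{pmatrix}$ and $S(z) := \begin{pmatrix} 1 & 1 & -1 \\ 1 & 1 & z \\ -1 & z^{-1} & 1 \end{pmatrix}$. Then $L'(z,p) \cdot S(z) \cdot L'(z^{-1},p)^{t} = S(z)$, where $X^{t}$ denotes the transpose. (Equivalently, $(L'(z^{-1},p)^{-1})^{t} = S(z)^{-1} L'(z,p) S(z)$.) -/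
open Matrix

/-- The Lax matrix of an inscribed polygon in terms of the inscribed
cross-ratio parameter `p`. -/
noncomputable def Lconic (z p : ℂ) : Matrix (Fin 3) (Fin 3) ℂ :=
  !![0, 0, 1; p - 1, 0, p; 0, z⁻¹ * (p - 1)⁻¹, p * (1 - p)⁻¹]

/-- The intertwining matrix `S(z)`. -/
noncomputable def Smat (z : ℂ) : Matrix (Fin 3) (Fin 3) ℂ :=
  !![1, 1, -1; 1, 1, z; -1, z⁻¹, 1]

theorem Lconic_transpose (z p : ℂ) :
    (Lconic z p)ᵀ = !![0, p - 1, 0; 0, 0, z⁻¹ * (p - 1)⁻¹; 1, p, p * (1 - p)⁻¹] := by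
  ext i j
  fin_cases i <;> fin_cases j <;> simp [Lconic]

theorem Lconic_selfdual_general (z p : ℂ) (hz : z ≠ 0) (hp1 : p ≠ 1) :
    Lconic z p * Smat z * (Lconic z⁻¹ p)ᵀ = Smat z := by
  have hp1' : p - 1 ≠ 0 := sub_ne_zero.mpr hp1
  rw [Lconic_transpose, inv_inv, Lconic, Smat, mul_fin_three, mul_fin_three]
  congrm !![?_, ?_, ?_; ?_, ?_, ?_; ?_, ?_, ?_] <;> field_simp <;> ring

theorem Lconic_selfdual (z p : ℂ) (hz : z ≠ 0) (hp : p ≠ 0) (hp1 : p ≠ 1) :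
    Lconic z p * Smat z * (Lconic z⁻¹ p)ᵀ = Smat z :=
  Lconic_selfdual_general z p hz hp1
end

section
/- Let $n \ge 1$ and let $p_1, \dots, p_n \in \mathbb{C}$ with $p_j \neq 0$ and $p_j \neq 1$ for all $j$, and let $z \in \mathbb{C}$, $z \neq 0$. Define $L'(z,p) := \begin{pmatrix} 0 & 0 & 1 \\ p-1 & 0 & p \\ 0 & z^{-1}(p-1)^{-1} & p(1-p)^{-1} \end{pmatrix}$, $S(z) := \begin{pmatrix} 1 & 1 & -1 \\ 1 & 1 & z \\ -1 & z^{-1} & 1 \end{pmatrix}$, and $M'(z) := L'(z,p_1) L'(z,p_2) \cdots L'(z,p_n)$. Then $M'(z) \cdot S(z) \cdot M'(z^{-1})^{t} = S(z)$, where $X^{t}$ denotes the transpose. -/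
/-!
The relation `L S Lᵀ = S`, read with the spectral parameter inverted in the right-hand factor,
is preserved under products, so it suffices to check it for a single Lax matrix `L'(z, p)`,
which is a direct `3 × 3` computation valid whenever `z ≠ 0` and `p ≠ 1`.
-/

open Matrix

/-- The scaled monodromy matrix `M'(z) = L'(z,p₁) ⋯ L'(z,pₙ)`. -/
noncomputable def Mconic (n : ℕ) (p : Fin n → ℂ) (z : ℂ) : Matrix (Fin 3) (Fin 3) ℂ :=
  (List.ofFn fun j : Fin n => Lconic z (p j)).prod

theorem Matrix.list_prod_map_mul_mul_transpose_list_prod_map {ι m R : Type*} [Fintype m]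
    [DecidableEq m] [CommSemiring R] (S : Matrix m m R) (f g : ι → Matrix m m R)
    (l : List ι) (h : ∀ i ∈ l, f i * S * (g i)ᵀ = S) :
    (l.map f).prod * S * (l.map g).prodᵀ = S := by
  induction l with
  | nil => simp
  | cons i l ih =>
    rw [List.forall_mem_cons] at h
    calc ((i :: l).map f).prod * S * ((i :: l).map g).prodᵀ
        = f i * ((l.map f).prod * S * (l.map g).prodᵀ) * (g i)ᵀ := by
          simp only [List.map_cons, List.prod_cons, transpose_mul, Matrix.mul_assoc]
      _ = S := by rw [ih h.2, h.1]

theorem Lconic_mul_Smat_mul_transpose_Lconic_inv {z p : ℂ} (hz : z ≠ 0) (hp : p ≠ 1) :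
    Lconic z p * Smat z * (Lconic z⁻¹ p)ᵀ = Smat z := by
  have hp₁ : p - 1 ≠ 0 := sub_ne_zero.mpr hp
  have hp₂ : 1 - p ≠ 0 := sub_ne_zero.mpr hp.symm
  ext i j
  fin_cases i <;> fin_cases j <;>
    simp [Lconic, Smat, mul_apply, Fin.sum_univ_three] <;> field_simp <;> ring

theorem monodromy_selfdual_twisted_general (n : ℕ) (p : Fin n → ℂ)
    (hp1 : ∀ j, p j ≠ 1) (z : ℂ) (hz : z ≠ 0) :
    Mconic n p z * Smat z * (Mconic n p z⁻¹)ᵀ = Smat z := by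
  have hstep : ∀ q ∈ List.ofFn p, Lconic z q * Smat z * (Lconic z⁻¹ q)ᵀ = Smat z := by
    intro q hq
    obtain ⟨j, rfl⟩ := List.mem_ofFn.mp hq
    exact Lconic_mul_Smat_mul_transpose_Lconic_inv hz (hp1 j)
  simpa only [Mconic, List.map_ofFn, Function.comp_def] using
    list_prod_map_mul_mul_transpose_list_prod_map (Smat z) (Lconic z) (Lconic z⁻¹) _ hstep

theorem monodromy_selfdual_twisted (n : ℕ) (hn : 1 ≤ n) (p : Fin n → ℂ)
    (hp0 : ∀ j, p j ≠ 0) (hp1 : ∀ j, p j ≠ 1) (z : ℂ) (hz : z ≠ 0) :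
    Mconic n p z * Smat z * (Mconic n p z⁻¹)ᵀ = Smat z :=
  monodromy_selfdual_twisted_general n p hp1 z hz
end

section
/- Let $n \ge 1$ and let $p_1, \dots, p_n \in \mathbb{C}$ with $p_j \neq 0$ and $p_j \neq 1$ for all $j$, and let $z \in \mathbb{C}$ with $z \neq 0$ and $z \neq -1$. Let $i = \sqrt{-1} \in \mathbb{C}$ and define $L'(z,p) := \begin{pmatrix} 0 & 0 & 1 \\ p-1 & 0 & p \\ 0 & z^{-1}(p-1)^{-1} & p(1-p)^{-1} \end{pmatrix}$, $T(z) := \begin{pmatrix} 1 & 0 & 0 \\ 1 & i & 1 \\ -1 & -i & z^{-1} \end{pmatrix}$ (which is invertible for $z \neq 0, -1$), $M'(z) := L'(z,p_1) \cdots L'(z,p_n)$, and $M(z) := T(z)^{-1} M'(z) T(z)$. Then $M(z) \cdot M(z^{-1})^{t} = I$, where $I$ is the $3 \times 3$ identity matrix; that is, $M$ satisfies the self-duality relation $M(z)^{-1} = M(z^{-1})^{t}$. -/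
open Matrix Complex

/-- The factor `T(z)` of the intertwining matrix `S(z)`. -/
noncomputable def Tmat (z : ℂ) : Matrix (Fin 3) (Fin 3) ℂ :=
  !![1, 0, 0; 1, I, 1; -1, -I, z⁻¹]

/-- The self-dual scaled monodromy matrix `M(z) = T(z)⁻¹ M'(z) T(z)`. -/
noncomputable def Mselfdual (n : ℕ) (p : Fin n → ℂ) (z : ℂ) : Matrix (Fin 3) (Fin 3) ℂ :=
  (Tmat z)⁻¹ * Mconic n p z * Tmat z

/-!
Put `Q(z) := T(z) T(z⁻¹)ᵀ`. A direct computation shows that every Lax matrix satisfies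
`L'(z,p) Q(z) L'(z⁻¹,p)ᵀ = Q(z)`, so the product `M'` does as well, and conjugating by `T`
turns this into `M(z) M(z⁻¹)ᵀ = T(z)⁻¹ Q(z) (T(z⁻¹)ᵀ)⁻¹ = 1`.
-/

namespace Matrix

variable {ι m R : Type*} [Fintype m] [DecidableEq m]

theorem prod_map_mul_mul_transpose_prod_map [CommSemiring R] {A B : ι → Matrix m m R}
    {Q : Matrix m m R} (l : List ι) (h : ∀ i ∈ l, A i * Q * (B i)ᵀ = Q) :
    (l.map A).prod * Q * (l.map B).prodᵀ = Q := by
  induction l with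
  | nil => simp
  | cons a l ih =>
    calc ((a :: l).map A).prod * Q * ((a :: l).map B).prodᵀ
        = A a * ((l.map A).prod * Q * (l.map B).prodᵀ) * (B a)ᵀ := by
          simp only [List.map_cons, List.prod_cons, transpose_mul, Matrix.mul_assoc]
      _ = Q := by
          rw [ih fun i hi => h i (List.mem_cons_of_mem a hi), h a List.mem_cons_self]

theorem nonsing_inv_conj_mul_transpose_nonsing_inv_conj_eq_one [CommRing R]
    {T S X Y : Matrix m m R} (hT : IsUnit T.det) (hS : IsUnit S.det)
    (h : X * (T * Sᵀ) * Yᵀ = T * Sᵀ) :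
    T⁻¹ * X * T * (S⁻¹ * Y * S)ᵀ = 1 := by
  have hSt : IsUnit Sᵀ.det := by rwa [det_transpose]
  calc T⁻¹ * X * T * (S⁻¹ * Y * S)ᵀ
      = T⁻¹ * (X * (T * Sᵀ) * Yᵀ) * (Sᵀ)⁻¹ := by
        simp only [transpose_mul, transpose_nonsing_inv, Matrix.mul_assoc]
    _ = 1 := by
        rw [h, Matrix.mul_assoc, Matrix.mul_assoc, mul_nonsing_inv _ hSt, Matrix.mul_one,
          nonsing_inv_mul _ hT]

end Matrix

noncomputable def Qmat (z : ℂ) : Matrix (Fin 3) (Fin 3) ℂ :=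
  !![1, 1, -1; 1, 1, z; -1, z⁻¹, 1]

lemma Tmat_mul_transpose_Tmat_inv {z : ℂ} (hz : z ≠ 0) : Tmat z * (Tmat z⁻¹)ᵀ = Qmat z := by
  ext i j
  fin_cases i <;> fin_cases j <;> simp [Tmat, Qmat, mul_apply, Fin.sum_univ_three, hz]

lemma Lconic_mul_Qmat_mul_transpose {z q : ℂ} (hz : z ≠ 0) (hq : q ≠ 1) :
    Lconic z q * Qmat z * (Lconic z⁻¹ q)ᵀ = Qmat z := by
  have hq₁ : q - 1 ≠ 0 := sub_ne_zero.mpr hq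
  have hq₂ : 1 - q ≠ 0 := sub_ne_zero.mpr hq.symm
  ext i j
  fin_cases i <;> fin_cases j <;>
    simp [Lconic, Qmat, mul_apply, Fin.sum_univ_three] <;> field_simp <;> ring

lemma Mconic_mul_Qmat_mul_transpose {n : ℕ} {p : Fin n → ℂ} (hp : ∀ j, p j ≠ 1) {z : ℂ}
    (hz : z ≠ 0) : Mconic n p z * Qmat z * (Mconic n p z⁻¹)ᵀ = Qmat z := by
  simp only [Mconic, List.ofFn_eq_map]
  exact prod_map_mul_mul_transpose_prod_map _ fun j _ => Lconic_mul_Qmat_mul_transpose hz (hp j)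

lemma det_Tmat (z : ℂ) : (Tmat z).det = I * (z⁻¹ + 1) := by
  simp [Tmat, det_fin_three]; ring

lemma isUnit_det_Tmat {z : ℂ} (hz : z ≠ -1) : IsUnit (Tmat z).det := by
  rw [det_Tmat, isUnit_iff_ne_zero]
  refine mul_ne_zero I_ne_zero fun h => hz ?_
  rw [← _root_.inv_inj, inv_neg, inv_one]
  exact eq_neg_of_add_eq_zero_left h

theorem monodromy_selfdual_general (n : ℕ) (p : Fin n → ℂ)
    (hp1 : ∀ j, p j ≠ 1) (z : ℂ) (hz : z ≠ 0) (hz1 : z ≠ -1) :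
    Mselfdual n p z * (Mselfdual n p z⁻¹)ᵀ = 1 := by
  have hz1' : z⁻¹ ≠ -1 := by rwa [ne_eq, inv_eq_iff_eq_inv, inv_neg, inv_one]
  refine nonsing_inv_conj_mul_transpose_nonsing_inv_conj_eq_one
    (isUnit_det_Tmat hz1) (isUnit_det_Tmat hz1') ?_
  rw [Tmat_mul_transpose_Tmat_inv hz]
  exact Mconic_mul_Qmat_mul_transpose hp1 hz

theorem monodromy_selfdual (n : ℕ) (hn : 1 ≤ n) (p : Fin n → ℂ)
    (hp0 : ∀ j, p j ≠ 0) (hp1 : ∀ j, p j ≠ 1) (z : ℂ) (hz : z ≠ 0) (hz1 : z ≠ -1) :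
    Mselfdual n p z * (Mselfdual n p z⁻¹)ᵀ = 1 :=
  monodromy_selfdual_general n p hp1 z hz hz1
end

section
/- Let $n \ge 1$. Let $V : \mathbb{Z} \to \mathbb{C}^3$ and $a, b : \mathbb{Z} \to \mathbb{C}$ with $a_i \neq 0$ and $b_i \neq 0$ for all $i$, such that for every $i \in \mathbb{Z}$: $\det(V_i, V_{i+1}, V_{i+2}) = 1$ (determinant of the matrix with these columns) and $V_{i+3} = a_i V_{i+2} + b_i V_{i+1} + V_i$. Let $\tilde{M}$ be an invertible $3 \times 3$ complex matrix and $t : \mathbb{Z} \to \mathbb{C}$ satisfy $\tilde{M} V_i = t_i V_{i+n}$ for all $i$. Define $x_i := a_{i-2}/(b_{i-2} b_{i-1})$, $y_i := -b_{i-1}/(a_{i-2} a_{i-1})$, and $L_j := \begin{pmatrix} 0 & 0 & 1 \\ -x_j y_j & 0 & 1 \\ 0 & -y_j & 1 \end{pmatrix}$. Then for every $i \in \mathbb{Z}$ there exist $c \in \mathbb{C}$, $c \neq 0$, and an invertible $3 \times 3$ complex matrix $P$ such that $L_i L_{i+1} \cdots L_{i+n-1} = c \, P^{-1} \tilde{M}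 P$. -/
open Matrix

/-- The 3×3 matrix whose columns are the vectors `v0, v1, v2`. -/
def colMat (v0 v1 v2 : Fin 3 → ℂ) : Matrix (Fin 3) (Fin 3) ℂ :=
  Matrix.of fun i j => ![v0, v1, v2] j i

/-- Corner invariant `x_j` in terms of the recurrence coefficients. -/
noncomputable def xCorner (a b : ℤ → ℂ) (j : ℤ) : ℂ := a (j - 2) / (b (j - 2) * b (j - 1))

/-- Corner invariant `y_j` in terms of the recurrence coefficients. -/
noncomputable def yCorner (a b : ℤ → ℂ) (j : ℤ) : ℂ := -(b (j - 1)) / (a (j - 2) * a (j - 1))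

/-- The Lax matrix `L_j` in terms of the corner invariants. -/
noncomputable def Lmat (a b : ℤ → ℂ) (j : ℤ) : Matrix (Fin 3) (Fin 3) ℂ :=
  !![0, 0, 1; -(xCorner a b j * yCorner a b j), 0, 1; 0, -(yCorner a b j), 1]

/-!
Rescale the frame `(V_{j-2}, V_{j-1}, V_j)` to
`F_j = (a_{j-2}⁻¹ V_{j-2}, (b_{j-2}/a_{j-2}) V_{j-1}, V_j)`. The recurrence says exactly that
`F_j L_j = a_{j-2}⁻¹ F_{j+1}`, so `F_i L_i ⋯ L_{i+n-1}` is a nonzero multiple of `F_{i+n}`.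
Expanding `M V_{j+3}` in the basis `V_{j+n}, V_{j+n+1}, V_{j+n+2}` in two ways shows that
`t_{j+3} = t_j`, `t_{j+3} b_{j+n} = t_{j+1} b_j` and `t_{j+3} a_{j+n} = t_{j+2} a_j`, which is what
makes `M F_i = t_i F_{i+n}`. Hence the product is a nonzero multiple of `F_i⁻¹ M F_i`.
-/

theorem prod_ofFn_int_add_succ {R : Type*} [Monoid R] (f : ℤ → R) (i : ℤ) (n : ℕ) :
    (List.ofFn fun k : Fin (n + 1) => f (i + (k : ℕ))).prod
      = f i * (List.ofFn fun k : Fin n => f (i + 1 + (k : ℕ))).prod := by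
  simp only [List.ofFn_succ, List.prod_cons, Fin.val_zero, Fin.val_succ]
  push_cast
  simp only [add_zero, add_assoc, add_comm (1 : ℤ)]

theorem mul_prod_ofFn_eq_smul_of_mul_eq_smul {K R : Type*} [CommMonoid K] [Monoid R]
    [MulAction K R] [IsScalarTower K R R] [SMulCommClass K R R]
    {X A : ℤ → R} {c : ℤ → K} (h : ∀ j, X j * A j = c j • X (j + 1)) (n : ℕ) (i : ℤ) :
    X i * (List.ofFn fun k : Fin n => A (i + (k : ℕ))).prod
      = (∏ k : Fin n, c (i + (k : ℕ))) • X (i + n) := by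
  induction n generalizing i with
  | zero => simp
  | succ n ih =>
    rw [prod_ofFn_int_add_succ, ← mul_assoc, h, smul_mul_assoc, ih, smul_smul,
      Fin.prod_univ_succ]
    have hX : i + 1 + (n : ℤ) = i + (n + 1 : ℕ) := by push_cast; ring
    have hc (k : Fin n) : i + 1 + ((k : ℕ) : ℤ) = i + ((k.succ : ℕ) : ℤ) := by
      rw [Fin.val_succ]; push_cast; ring
    simp only [hX, hc, Fin.val_zero, Nat.cast_zero, add_zero]

section colMat

variable (v0 v1 v2 : Fin 3 → ℂ)

theorem colMat_mulVec (c : Fin 3 → ℂ) :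
    colMat v0 v1 v2 *ᵥ c = c 0 • v0 + c 1 • v1 + c 2 • v2 := by
  funext p
  simp [colMat, mulVec, dotProduct, Fin.sum_univ_three, mul_comm]

theorem mul_colMat (M : Matrix (Fin 3) (Fin 3) ℂ) :
    M * colMat v0 v1 v2 = colMat (M *ᵥ v0) (M *ᵥ v1) (M *ᵥ v2) := by
  ext p q
  fin_cases q <;> simp [colMat, mul_apply, mulVec, dotProduct]

theorem smul_colMat (r : ℂ) : r • colMat v0 v1 v2 = colMat (r • v0) (r • v1) (r • v2) := by
  ext p q
  fin_cases q <;> simp [colMat]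

theorem colMat_smul (r0 r1 r2 : ℂ) :
    colMat (r0 • v0) (r1 • v1) (r2 • v2) = colMat v0 v1 v2 * diagonal ![r0, r1, r2] := by
  ext p q
  fin_cases q <;> simp [colMat, mul_comm]

end colMat

noncomputable def frame (V : ℤ → Fin 3 → ℂ) (a b : ℤ → ℂ) (j : ℤ) : Matrix (Fin 3) (Fin 3) ℂ :=
  colMat ((a (j - 2))⁻¹ • V (j - 2)) ((b (j - 2) / a (j - 2)) • V (j - 1)) (V j)

section Frame

variable {V : ℤ → Fin 3 → ℂ} {a b : ℤ → ℂ}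

theorem det_frame (hdet : ∀ i : ℤ, (colMat (V i) (V (i + 1)) (V (i + 2))).det = 1) (j : ℤ) :
    (frame V a b j).det = b (j - 2) / a (j - 2) ^ 2 := by
  have h := hdet (j - 2)
  rw [show j - 2 + 1 = j - 1 by ring, show j - 2 + 2 = j by ring] at h
  rw [frame, ← one_smul ℂ (V j), colMat_smul, det_mul, h, det_diagonal, Fin.prod_univ_three]
  simp only [cons_val_zero, cons_val_one, cons_val_two, head_cons, tail_cons]
  ring

theorem isUnit_det_frame (ha : ∀ i, a i ≠ 0) (hb : ∀ i, b i ≠ 0)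
    (hdet : ∀ i : ℤ, (colMat (V i) (V (i + 1)) (V (i + 2))).det = 1) (j : ℤ) :
    IsUnit (frame V a b j).det := by
  rw [det_frame hdet]
  exact (div_ne_zero (hb _) (pow_ne_zero 2 (ha _))).isUnit

theorem frame_mul_Lmat (ha : ∀ i, a i ≠ 0) (hb : ∀ i, b i ≠ 0)
    (hrec : ∀ i : ℤ, V (i + 3) = a i • V (i + 2) + b i • V (i + 1) + V i) (j : ℤ) :
    frame V a b j * Lmat a b j = (a (j - 2))⁻¹ • frame V a b (j + 1) := by
  have h := hrec (j - 2)
  rw [show j - 2 + 3 = j + 1 by ring, show j - 2 + 2 = j by ring,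
    show j - 2 + 1 = j - 1 by ring] at h
  rw [frame, frame, show j + 1 - 2 = j - 1 by ring, show j + 1 - 1 = j by ring, smul_colMat, h]
  ext p q
  fin_cases q <;>
    simp only [colMat, Lmat, xCorner, yCorner, mul_apply, of_apply, Fin.sum_univ_three, cons_val',
      cons_val, cons_val_zero, cons_val_one, cons_val_fin_one, Fin.isValue, Fin.zero_eta, Fin.mk_one,
      Fin.reduceFinMk, Pi.smul_apply,
      Pi.add_apply, smul_eq_mul, smul_add, mul_zero, mul_one, mul_neg, zero_add, add_zero]
  · field_simp [ha, hb]
  · field_simp [ha, hb]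
  · field_simp [ha]
    ring

end Frame

section Monodromy

variable {V : ℤ → Fin 3 → ℂ} {a b : ℤ → ℂ} {M : Matrix (Fin 3) (Fin 3) ℂ} {t : ℤ → ℂ} {n : ℕ}

theorem monodromy_coeff_relations
    (hdet : ∀ i : ℤ, (colMat (V i) (V (i + 1)) (V (i + 2))).det = 1)
    (hrec : ∀ i : ℤ, V (i + 3) = a i • V (i + 2) + b i • V (i + 1) + V i)
    (hmon : ∀ i : ℤ, M *ᵥ V i = t i • V (i + n)) (j : ℤ) :
    t j = t (j + 3) ∧ t (j + 1) * b j = t (j + 3) * b (j + n) ∧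
      t (j + 2) * a j = t (j + 3) * a (j + n) := by
  have hinj : Function.Injective (colMat (V (j + n)) (V (j + n + 1)) (V (j + n + 2))).mulVec :=
    mulVec_injective_iff_isUnit.2 ((isUnit_iff_isUnit_det _).2 (by simp [hdet]))
  have key : (![t j, t (j + 1) * b j, t (j + 2) * a j] : Fin 3 → ℂ)
      = ![t (j + 3), t (j + 3) * b (j + n), t (j + 3) * a (j + n)] := hinj <| by
    simp only [colMat_mulVec, cons_val_zero, cons_val_one, cons_val_two, head_cons, tail_cons]
    calc _ = M *ᵥ V (j + 3) := by
          rw [hrec, mulVec_add, mulVec_add, mulVec_smul, mulVec_smul, hmon, hmon, hmon,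
            show j + 1 + n = j + n + 1 by ring, show j + 2 + n = j + n + 2 by ring]
          module
      _ = _ := by
          rw [hmon, show j + 3 + n = j + n + 3 by ring, hrec]
          module
  exact ⟨congrFun key 0, congrFun key 1, congrFun key 2⟩

theorem mul_frame (hdet : ∀ i : ℤ, (colMat (V i) (V (i + 1)) (V (i + 2))).det = 1)
    (hrec : ∀ i : ℤ, V (i + 3) = a i • V (i + 2) + b i • V (i + 1) + V i)
    (hmon : ∀ i : ℤ, M *ᵥ V i = t i • V (i + n)) (ha : ∀ i, a i ≠ 0) (j : ℤ) :
    M * frame V a b j = t j • frame V a b (j + n) := by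
  obtain ⟨ht, htb, hta⟩ := monodromy_coeff_relations hdet hrec hmon (j - 2)
  simp only [show j - 2 + 3 = j + 1 by ring, show j - 2 + 2 = j by ring,
    show j - 2 + 1 = j - 1 by ring] at ht htb hta
  rw [frame, frame, mul_colMat, smul_colMat, mulVec_smul, mulVec_smul, hmon, hmon, hmon,
    smul_smul, smul_smul, smul_smul, smul_smul, show j + n - 2 = j - 2 + n by ring,
    show j + n - 1 = j - 1 + n by ring]
  congr 2
  · field_simp [ha]
    linear_combination a (j - 2 + n) * ht - hta
  · field_simp [ha]
    linear_combination a (j - 2 + n) * htb - b (j - 2 + n) * hta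

theorem monodromy_factor_ne_zero
    (hdet : ∀ i : ℤ, (colMat (V i) (V (i + 1)) (V (i + 2))).det = 1)
    (hrec : ∀ i : ℤ, V (i + 3) = a i • V (i + 2) + b i • V (i + 1) + V i)
    (hmon : ∀ i : ℤ, M *ᵥ V i = t i • V (i + n)) (ha : ∀ i, a i ≠ 0) (hb : ∀ i, b i ≠ 0)
    (hM : IsUnit M.det) (j : ℤ) : t j ≠ 0 := by
  have h := congrArg det (mul_frame hdet hrec hmon ha j)
  rw [det_mul, det_smul, Fintype.card_fin] at h
  intro h0
  rw [h0, zero_pow three_ne_zero, zero_mul] at h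
  exact (hM.mul (isUnit_det_frame ha hb hdet j)).ne_zero h

end Monodromy

theorem monodromy_conjugate_to_product_general (n : ℕ)
    (V : ℤ → Fin 3 → ℂ) (a b : ℤ → ℂ)
    (ha : ∀ i, a i ≠ 0) (hb : ∀ i, b i ≠ 0)
    (hdet : ∀ i : ℤ, (colMat (V i) (V (i + 1)) (V (i + 2))).det = 1)
    (hrec : ∀ i : ℤ, V (i + 3) = a i • V (i + 2) + b i • V (i + 1) + V i)
    (M : Matrix (Fin 3) (Fin 3) ℂ) (hM : IsUnit M.det)
    (t : ℤ → ℂ) (hmon : ∀ i : ℤ, M.mulVec (V i) = t i • V (i + n)) :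
    ∀ i : ℤ, ∃ c : ℂ, c ≠ 0 ∧ ∃ P : Matrix (Fin 3) (Fin 3) ℂ, IsUnit P.det ∧
      (List.ofFn fun k : Fin n => Lmat a b (i + (k : ℕ))).prod = c • (P⁻¹ * M * P) := by
  intro i
  set P := frame V a b i
  set s := ∏ k : Fin n, (a (i + (k : ℕ) - 2))⁻¹
  have hP : IsUnit P.det := isUnit_det_frame ha hb hdet i
  have hs : s ≠ 0 := Finset.prod_ne_zero_iff.2 fun k _ => inv_ne_zero (ha _)
  have ht := monodromy_factor_ne_zero hdet hrec hmon ha hb hM i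
  have hgauge : P * (List.ofFn fun k : Fin n => Lmat a b (i + (k : ℕ))).prod
      = s • frame V a b (i + n) :=
    mul_prod_ofFn_eq_smul_of_mul_eq_smul (frame_mul_Lmat ha hb hrec) n i
  refine ⟨s / t i, div_ne_zero hs ht, P, hP, ?_⟩
  calc _ = P⁻¹ * (s • frame V a b (i + n)) := by
        rw [← hgauge, ← Matrix.mul_assoc, nonsing_inv_mul _ hP, Matrix.one_mul]
    _ = (s / t i) • (P⁻¹ * M * P) := by
        rw [Matrix.mul_assoc, mul_frame hdet hrec hmon ha]
        simp only [Matrix.mul_smul, smul_smul, div_mul_cancel₀ _ ht]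

theorem monodromy_conjugate_to_product (n : ℕ) (hn : 1 ≤ n)
    (V : ℤ → Fin 3 → ℂ) (a b : ℤ → ℂ)
    (ha : ∀ i, a i ≠ 0) (hb : ∀ i, b i ≠ 0)
    (hdet : ∀ i : ℤ, (colMat (V i) (V (i + 1)) (V (i + 2))).det = 1)
    (hrec : ∀ i : ℤ, V (i + 3) = a i • V (i + 2) + b i • V (i + 1) + V i)
    (M : Matrix (Fin 3) (Fin 3) ℂ) (hM : IsUnit M.det)
    (t : ℤ → ℂ) (hmon : ∀ i : ℤ, M.mulVec (V i) = t i • V (i + n)) :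
    ∀ i : ℤ, ∃ c : ℂ, c ≠ 0 ∧ ∃ P : Matrix (Fin 3) (Fin 3) ℂ, IsUnit P.det ∧
      (List.ofFn fun k : Fin n => Lmat a b (i + (k : ℕ))).prod = c • (P⁻¹ * M * P) :=
  monodromy_conjugate_to_product_general n V a b ha hb hdet hrec M hM t hmon
end

section
/- Let $R$ be a commutative ring, let $x, y, u \in R$ (where $u$ stands for $z^{-1}$), and define $L := \begin{pmatrix} 0 & 0 & 1 \\ -xy & 0 & 1 \\ 0 & -u y & 1 \end{pmatrix}$, $\hat{L} := \begin{pmatrix} 1 & 0 & 1 \\ 1 - xy & 0 & 1 \\ 0 & -u y & 0 \end{pmatrix}$, and $U := \begin{pmatrix} 1 & 0 & 0 \\ 0 & 1 & 0 \\ 1 & 0 & 1 \end{pmatrix}$. Then $U$ is invertible and $L = U \hat{L} U^{-1}$. -/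
open Matrix

theorem det_shear_fin_three {R : Type*} [CommRing R] (a : R) :
    (!![1, 0, 0; 0, 1, 0; a, 0, 1] : Matrix (Fin 3) (Fin 3) R).det = 1 := by
  simp [det_fin_three]

theorem lax_mul_shear_eq_shear_mul {R : Type*} [CommRing R] (x y u : R) :
    (!![0, 0, 1; -(x * y), 0, 1; 0, -(u * y), 1] : Matrix (Fin 3) (Fin 3) R)
        * !![1, 0, 0; 0, 1, 0; 1, 0, 1]
      = !![1, 0, 0; 0, 1, 0; 1, 0, 1] * !![1, 0, 1; 1 - x * y, 0, 1; 0, -(u * y), 0] := by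
  simp [neg_add_eq_sub]

theorem Lax_conjugate_positive (R : Type*) [CommRing R] (x y u : R) :
    IsUnit (!![1, 0, 0; 0, 1, 0; 1, 0, 1] : Matrix (Fin 3) (Fin 3) R).det ∧
    (!![0, 0, 1; -(x * y), 0, 1; 0, -(u * y), 1] : Matrix (Fin 3) (Fin 3) R)
      = !![1, 0, 0; 0, 1, 0; 1, 0, 1] * !![1, 0, 1; 1 - x * y, 0, 1; 0, -(u * y), 0]
          * (!![1, 0, 0; 0, 1, 0; 1, 0, 1] : Matrix (Fin 3) (Fin 3) R)⁻¹ := by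
  have hU : IsUnit (!![1, 0, 0; 0, 1, 0; 1, 0, 1] : Matrix (Fin 3) (Fin 3) R).det := by
    rw [det_shear_fin_three]
    exact isUnit_one
  refine ⟨hU, ?_⟩
  rw [← lax_mul_shear_eq_shear_mul]
  exact (mul_nonsing_inv_cancel_right _ _ hU).symm
end

section
/- Let $R$ be a commutative ring, let $x, y, z \in R$, and define $L^* := \begin{pmatrix} 1 & -1 & 0 \\ xz & 0 & -xz \\ xy & 0 & 0 \end{pmatrix}$, $\hat{L}^* := \begin{pmatrix} 0 & 1 & 1-xy \\ -xz & 0 & 0 \\ 0 & 1 & 1 \end{pmatrix}$, and $V := \begin{pmatrix} 0 & 0 & 1 \\ 0 & -1 & 0 \\ -1 & 0 & 1 \end{pmatrix}$. Then $V$ is invertible and $L^* = V \hat{L}^* V^{-1}$. -/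
/- `V` sends `(a, b, c)` to `(c, -b, c - a)`, so its inverse `(p, q, r) ↦ (p - r, -q, p)` has
integer entries. With `V⁻¹` written out, the conjugation identity is an entrywise polynomial
identity holding in every commutative ring. -/

theorem conjugator_mul_inverse (R : Type*) [Ring R] :
    (!![0, 0, 1; 0, -1, 0; -1, 0, 1] : Matrix (Fin 3) (Fin 3) R) * !![1, 0, -1; 0, -1, 0; 1, 0, 0]
      = 1 := by
  simp [Matrix.one_fin_three]

theorem conjugator_inv (R : Type*) [CommRing R] :
    (!![0, 0, 1; 0, -1, 0; -1, 0, 1] : Matrix (Fin 3) (Fin 3) R)⁻¹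
      = !![1, 0, -1; 0, -1, 0; 1, 0, 0] :=
  Matrix.inv_eq_right_inv (conjugator_mul_inverse R)

theorem adjugate_Lax_eq_conjugator_mul (R : Type*) [CommRing R] (x y z : R) :
    (!![1, -1, 0; x * z, 0, -(x * z); x * y, 0, 0] : Matrix (Fin 3) (Fin 3) R)
      = !![0, 0, 1; 0, -1, 0; -1, 0, 1] * !![0, 1, 1 - x * y; -(x * z), 0, 0; 0, 1, 1]
          * !![1, 0, -1; 0, -1, 0; 1, 0, 0] := by
  simp

theorem adjugate_Lax_conjugate_positive (R : Type*) [CommRing R] (x y z : R) :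
    IsUnit (!![0, 0, 1; 0, -1, 0; -1, 0, 1] : Matrix (Fin 3) (Fin 3) R).det ∧
    (!![1, -1, 0; x * z, 0, -(x * z); x * y, 0, 0] : Matrix (Fin 3) (Fin 3) R)
      = !![0, 0, 1; 0, -1, 0; -1, 0, 1] * !![0, 1, 1 - x * y; -(x * z), 0, 0; 0, 1, 1]
          * (!![0, 0, 1; 0, -1, 0; -1, 0, 1] : Matrix (Fin 3) (Fin 3) R)⁻¹ := by
  refine ⟨Matrix.isUnit_det_of_right_inverse (conjugator_mul_inverse R), ?_⟩
  rw [conjugator_inv]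
  exact adjugate_Lax_eq_conjugator_mul R x y z
end

section
/- Let $n \ge 3$ and let $x_1, \dots, x_n, y_1, \dots, y_n$ be real numbers with $0 < x_j < 1$ and $0 < y_j < 1$ for all $j$. Over the polynomial ring $\mathbb{R}[s]$, define the $3 \times 3$ matrices $\hat{L}_j(s) := \begin{pmatrix} 1 & 0 & 1 \\ 1 - x_j y_j & 0 & 1 \\ 0 & s \, y_j & 0 \end{pmatrix}$ and set $P(s) := \mathrm{trace}\big(\hat{L}_1(s) \hat{L}_2(s) \cdots \hat{L}_n(s)\big) \in \mathbb{R}[s]$. Then for every integer $k$ with $1 \le k \le \lfloor n/2 \rfloor$, the coefficient of $s^k$ in $P(s)$ is strictly positive. -/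
open Matrix Polynomial

/-- The conjugated Lax matrix `L̂ⱼ(s)` over `ℝ[s]`, with corner invariants
`x j`, `y j`. -/
noncomputable def LhatPoly (n : ℕ) (x y : Fin n → ℝ) (j : Fin n) :
    Matrix (Fin 3) (Fin 3) ℝ[X] :=
  !![1, 0, 1;
     C (1 - x j * y j), 0, 1;
     0, X * C (y j), 0]

/-!
All entries of the matrices `L̂ⱼ(s)` are polynomials with nonnegative coefficients, so the
coefficient of `s ^ k` in an entry of their product is positive as soon as some path in the
transition graph on `{0, 1, 2}` collects a positive coefficient of `s ^ k`. Only the edge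
`2 → 1` carries a factor `s`. For `2k ≤ n`, a closed path at `2` of length `n` through this edge
exactly `k` times is made of the cycles `2 → 1 → 2`, the last one stretched to
`2 → 1 → 0 → ⋯ → 0 → 2`.
-/

namespace Polynomial

variable {R : Type*} [CommSemiring R] [PartialOrder R]

section IsOrderedRing

variable [IsOrderedRing R]

variable (R) in
def nonnegCoeffs : Subsemiring R[X] where
  carrier := {p | ∀ n, 0 ≤ p.coeff n}
  mul_mem' {p q} hp hq n := by
    rw [coeff_mul]
    exact Finset.sum_nonneg fun ij _ => mul_nonneg (hp ij.1) (hq ij.2)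
  one_mem' n := by
    rw [coeff_one]
    split_ifs <;> simp
  add_mem' {p q} hp hq n := by
    rw [coeff_add]
    exact add_nonneg (hp n) (hq n)
  zero_mem' n := by simp

theorem C_mem_nonnegCoeffs {a : R} (ha : 0 ≤ a) : C a ∈ nonnegCoeffs R := fun n => by
  rw [coeff_C]
  split_ifs <;> simp [ha]

theorem X_mem_nonnegCoeffs : X ∈ nonnegCoeffs R := fun n => by
  rw [coeff_X]
  split_ifs <;> simp

end IsOrderedRing

variable [IsStrictOrderedRing R]

theorem coeff_mul_add_pos {p q : R[X]} (hp : p ∈ nonnegCoeffs R) (hq : q ∈ nonnegCoeffs R)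
    {i j : ℕ} (hi : 0 < p.coeff i) (hj : 0 < q.coeff j) : 0 < (p * q).coeff (i + j) := by
  rw [coeff_mul]
  exact Finset.sum_pos' (fun kl _ => mul_nonneg (hp kl.1) (hq kl.2))
    ⟨(i, j), by simp, mul_pos hi hj⟩

end Polynomial

namespace Matrix

variable {ι R : Type*} [Fintype ι] [DecidableEq ι]
  [CommSemiring R] [PartialOrder R] [IsStrictOrderedRing R]

theorem coeff_mul_apply_add_pos {A B : Matrix ι ι R[X]}
    (hA : A ∈ (nonnegCoeffs R).matrix) (hB : B ∈ (nonnegCoeffs R).matrix)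
    {i l j : ι} {a b : ℕ}
    (ha : 0 < (A i l).coeff a) (hb : 0 < (B l j).coeff b) : 0 < ((A * B) i j).coeff (a + b) := by
  rw [mul_apply, finsetSum_coeff]
  exact Finset.sum_pos' (fun m _ => (nonnegCoeffs R).mul_mem (hA i m) (hB m j) _)
    ⟨l, Finset.mem_univ l, coeff_mul_add_pos (hA i l) (hB l j) ha hb⟩

theorem coeff_trace_pos {P : Matrix ι ι R[X]} (hP : P ∈ (nonnegCoeffs R).matrix)
    {i : ι} {k : ℕ} (h : 0 < (P i i).coeff k) : 0 < P.trace.coeff k := by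
  rw [trace, finsetSum_coeff]
  exact Finset.sum_pos' (fun m _ => hP m m k) ⟨i, Finset.mem_univ i, h⟩

end Matrix

section

variable {R : Type*} [CommSemiring R] [PartialOrder R] [IsStrictOrderedRing R]

/-- The edges of the transition graph of `L̂ⱼ(s)` used by the paths, each with the power of `s`
at which its entry has a positive coefficient. -/
structure LaxPositive (M : Matrix (Fin 3) (Fin 3) R[X]) : Prop where
  mem_matrix : M ∈ (nonnegCoeffs R).matrix
  coeff_zero_zero : 0 < (M 0 0).coeff 0
  coeff_zero_two : 0 < (M 0 2).coeff 0
  coeff_one_zero : 0 < (M 1 0).coeff 0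
  coeff_one_two : 0 < (M 1 2).coeff 0
  coeff_two_one : 0 < (M 2 1).coeff 1

namespace LaxPositive

variable {l : List (Matrix (Fin 3) (Fin 3) R[X])}

theorem prod_mem_matrix (hl : ∀ M ∈ l, LaxPositive M) : l.prod ∈ (nonnegCoeffs R).matrix :=
  list_prod_mem fun M hM => (hl M hM).mem_matrix

theorem coeff_prod_zero_two_pos (hl : ∀ M ∈ l, LaxPositive M) (hne : l ≠ []) :
    0 < (l.prod 0 2).coeff 0 := by
  induction l with
  | nil => exact absurd rfl hne
  | cons M l ih =>
    have hM := hl M List.mem_cons_self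
    have hl' : ∀ N ∈ l, LaxPositive N := fun N hN => hl N (List.mem_cons_of_mem M hN)
    rcases eq_or_ne l [] with rfl | hne'
    · simpa using hM.coeff_zero_two
    · exact coeff_mul_apply_add_pos hM.mem_matrix (prod_mem_matrix hl') hM.coeff_zero_zero
        (ih hl' hne')

theorem coeff_prod_one_two_pos (hl : ∀ M ∈ l, LaxPositive M) (hne : l ≠ []) :
    0 < (l.prod 1 2).coeff 0 := by
  obtain ⟨M, l, rfl⟩ := List.exists_cons_of_ne_nil hne
  have hM := hl M List.mem_cons_self
  have hl' : ∀ N ∈ l, LaxPositive N := fun N hN => hl N (List.mem_cons_of_mem M hN)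
  rcases eq_or_ne l [] with rfl | hne'
  · simpa using hM.coeff_one_two
  · exact coeff_mul_apply_add_pos hM.mem_matrix (prod_mem_matrix hl') hM.coeff_one_zero
      (coeff_prod_zero_two_pos hl' hne')

theorem coeff_prod_two_two_one_pos (hl : ∀ M ∈ l, LaxPositive M) (hlen : 2 ≤ l.length) :
    0 < (l.prod 2 2).coeff 1 := by
  obtain ⟨M, l, rfl⟩ :=
    List.exists_cons_of_ne_nil (List.ne_nil_of_length_pos (l := l) (by omega))
  have hl' : ∀ N ∈ l, LaxPositive N := fun N hN => hl N (List.mem_cons_of_mem M hN)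
  have hM := hl M List.mem_cons_self
  exact coeff_mul_apply_add_pos hM.mem_matrix (prod_mem_matrix hl') hM.coeff_two_one
    (coeff_prod_one_two_pos hl' (List.ne_nil_of_length_pos (by simp at hlen; omega)))

theorem coeff_prod_two_two_pos (hl : ∀ M ∈ l, LaxPositive M) {k : ℕ} (hk : 1 ≤ k)
    (hlen : 2 * k ≤ l.length) : 0 < (l.prod 2 2).coeff k := by
  induction k, hk using Nat.le_induction generalizing l with
  | base => exact coeff_prod_two_two_one_pos hl (by omega)
  | succ k hk ih =>
    have hdrop : ∀ N ∈ l.drop 2, LaxPositive N := fun N hN => hl N (List.mem_of_mem_drop hN)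
    have htake : ∀ N ∈ l.take 2, LaxPositive N := fun N hN => hl N (List.mem_of_mem_take hN)
    rw [← List.prod_take_mul_prod_drop l 2, add_comm]
    exact coeff_mul_apply_add_pos (prod_mem_matrix htake) (prod_mem_matrix hdrop)
      (coeff_prod_two_two_one_pos htake (by simp; omega)) (ih hdrop (by simp; omega))

end LaxPositive

end

theorem laxPositive_lhatPoly {n : ℕ} {x y : Fin n → ℝ} {j : Fin n} (hxy : x j * y j < 1)
    (hy : 0 < y j) : LaxPositive (LhatPoly n x y j) where
  mem_matrix a b := show LhatPoly n x y j a b ∈ nonnegCoeffs ℝ by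
    have h1 : C (1 - x j * y j) ∈ nonnegCoeffs ℝ := C_mem_nonnegCoeffs (by linarith)
    have h2 : X * C (y j) ∈ nonnegCoeffs ℝ :=
      mul_mem X_mem_nonnegCoeffs (C_mem_nonnegCoeffs hy.le)
    fin_cases a <;> fin_cases b <;>
      simp only [LhatPoly, of_apply] <;>
      first | exact one_mem _ | exact zero_mem _ | exact h1 | exact h2
  coeff_zero_zero := by simp [LhatPoly]
  coeff_zero_two := by simp [LhatPoly]
  coeff_one_zero := by simp [LhatPoly, coeff_C, hxy]
  coeff_one_two := by simp [LhatPoly]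
  coeff_two_one := by simp [LhatPoly, hy]

theorem even_invariants_positive_convex_general (n : ℕ)
    (x y : Fin n → ℝ) (hx : ∀ j, 0 < x j ∧ x j < 1) (hy : ∀ j, 0 < y j ∧ y j < 1) :
    ∀ k : ℕ, 1 ≤ k → k ≤ n / 2 →
      0 < (((List.ofFn fun j : Fin n => LhatPoly n x y j).prod).trace).coeff k := by
  intro k hk hkn
  have hL : ∀ M ∈ List.ofFn fun j : Fin n => LhatPoly n x y j, LaxPositive M := by
    intro M hM
    obtain ⟨j, rfl⟩ := List.mem_ofFn.mp hM
    have hxy : x j * y j < 1 :=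
      mul_lt_one_of_nonneg_of_lt_one_left (hx j).1.le (hx j).2 (hy j).2.le
    exact laxPositive_lhatPoly hxy (hy j).1
  exact coeff_trace_pos (LaxPositive.prod_mem_matrix hL)
    (LaxPositive.coeff_prod_two_two_pos hL hk (by simp; omega))

theorem even_invariants_positive_convex (n : ℕ) (hn : 3 ≤ n)
    (x y : Fin n → ℝ) (hx : ∀ j, 0 < x j ∧ x j < 1) (hy : ∀ j, 0 < y j ∧ y j < 1) :
    ∀ k : ℕ, 1 ≤ k → k ≤ n / 2 →
      0 < (((List.ofFn fun j : Fin n => LhatPoly n x y j).prod).trace).coeff k :=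
  even_invariants_positive_convex_general n x y hx hy
end
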